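/- Main theorem: Let G be a connected weighted graph on n vertices with Laplacian L = (A−D)/d_max, P = Id+L with eigenvalues λ_k and orthonormal eigenvectors φ_k, and X_λ the span of eigenvectors with |λ_k| ≥ λ. Let W ⊂ V with weights a_w summing to 1. Then for all f ∈ X_λ, ℓ ∈ ℕ, 0 < λ < 1: |(1/n)Σ_{v∈V} f(v) − Σ_{w∈W} a_w f(w)| ≤ (‖f‖_{X_λ}/λ^ℓ)·(‖(Id+L)^ℓ Σ_{w∈W} a_w δ_w‖₂² − 1/n)^{1/2}. -/

import Mathlib

open Matrix Finset

/-!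
The quadrature error is `⟨f, e⟩` with `e = 𝟙/n - μ`. Expanding both vectors in the orthonormal
eigenbasis, only the coefficients in `X_λ` survive, so Cauchy–Schwarz bounds the error by
`‖f‖_{X_λ}` times the norm of the `X_λ`-part of `e`. On `X_λ`, `P^ℓ` multiplies the `k`-th
coefficient by `λ_k^ℓ` with `|λ_k| ≥ λ`, so that part has norm at most `λ^{-ℓ} ‖P^ℓ e‖`. Finally
`P` is symmetric and fixes constants, hence `P^ℓ e = 𝟙/n - P^ℓ μ` where `P^ℓ μ` still has total
mass `1`, and expanding the square gives `‖P^ℓ e‖² = ‖P^ℓ μ‖² - 1/n`.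
-/

section Spectral

variable {ι : Type*} [Fintype ι] [DecidableEq ι]

theorem pow_mulVec_eq_pow_smul {P : Matrix ι ι ℝ} {x : ι → ℝ} {c : ℝ} (h : P *ᵥ x = c • x)
    (m : ℕ) : (P ^ m) *ᵥ x = c ^ m • x := by
  induction m with
  | zero => simp
  | succ m ih => rw [pow_succ, ← mulVec_mulVec, h, mulVec_smul, ih, smul_smul, pow_succ']

theorem pow_mulVec_dotProduct_of_isSymm {P : Matrix ι ι ℝ} (hP : P.IsSymm) {x : ι → ℝ} {c : ℝ}
    (h : P *ᵥ x = c • x) (m : ℕ) (v : ι → ℝ) : (P ^ m *ᵥ v) ⬝ᵥ x = c ^ m * (v ⬝ᵥ x) := by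
  rw [dotProduct_comm, dotProduct_mulVec, ← mulVec_transpose, (hP.pow m).eq,
    pow_mulVec_eq_pow_smul h, smul_dotProduct, smul_eq_mul, dotProduct_comm]

theorem pow_mulVec_eq_self_of_mulVec_eq_self {P : Matrix ι ι ℝ} {x : ι → ℝ} (h : P *ᵥ x = x)
    (m : ℕ) : (P ^ m) *ᵥ x = x := by
  simpa using pow_mulVec_eq_pow_smul (c := 1) (by simpa using h) m

variable {φ : ι → ι → ℝ}

theorem sum_dotProduct_mul_dotProduct_of_orthonormal
    (horth : ∀ k l, ∑ i, φ k i * φ l i = if k = l then (1 : ℝ) else 0) (v w : ι → ℝ) :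
    ∑ k, (v ⬝ᵥ φ k) * (w ⬝ᵥ φ k) = v ⬝ᵥ w := by
  set M : Matrix ι ι ℝ := Matrix.of φ
  have hM : Mᵀ * M = 1 := mul_eq_one_comm.mp <| by
    ext k l
    simpa [M, Matrix.mul_apply, Matrix.one_apply] using horth k l
  have hMv : ∀ u, M *ᵥ u = fun k => u ⬝ᵥ φ k := fun u => by
    ext k; simp [M, Matrix.mulVec, dotProduct_comm]
  calc ∑ k, (v ⬝ᵥ φ k) * (w ⬝ᵥ φ k) = (M *ᵥ v) ⬝ᵥ (M *ᵥ w) := by simp [hMv, dotProduct]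
    _ = v ⬝ᵥ w := by
      rw [dotProduct_mulVec, ← mulVec_transpose, mulVec_mulVec, hM, one_mulVec]

theorem sum_sq_dotProduct_of_orthonormal
    (horth : ∀ k l, ∑ i, φ k i * φ l i = if k = l then (1 : ℝ) else 0) (v : ι → ℝ) :
    ∑ k, (v ⬝ᵥ φ k) ^ 2 = ∑ i, v i ^ 2 := by
  simpa [sq, dotProduct] using sum_dotProduct_mul_dotProduct_of_orthonormal horth v v

theorem dotProduct_eq_zero_of_mem_span
    (horth : ∀ k l, ∑ i, φ k i * φ l i = if k = l then (1 : ℝ) else 0)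
    {s : Set ι} {f : ι → ℝ} (hf : f ∈ Submodule.span ℝ (φ '' s)) {k : ι} (hk : k ∉ s) :
    f ⬝ᵥ φ k = 0 := by
  induction hf using Submodule.span_induction with
  | mem x hx =>
    obtain ⟨j, hj, rfl⟩ := hx
    exact (horth j k).trans (if_neg fun (hjk : j = k) => hk (hjk ▸ hj))
  | zero => simp
  | add x y _ _ hx hy => simp [add_dotProduct, hx, hy]
  | smul r x _ hx => simp [smul_dotProduct, hx]

theorem abs_dotProduct_le_of_mem_span
    (horth : ∀ k l, ∑ i, φ k i * φ l i = if k = l then (1 : ℝ) else 0)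
    {p : ι → Prop} [DecidablePred p] {f : ι → ℝ} (hf : f ∈ Submodule.span ℝ (φ '' {k | p k}))
    (e : ι → ℝ) :
    |f ⬝ᵥ e|
      ≤ √(∑ k ∈ univ.filter p, (f ⬝ᵥ φ k) ^ 2) * √(∑ k ∈ univ.filter p, (e ⬝ᵥ φ k) ^ 2) := by
  have hexp : f ⬝ᵥ e = ∑ k ∈ univ.filter p, (f ⬝ᵥ φ k) * (e ⬝ᵥ φ k) := by
    rw [← sum_dotProduct_mul_dotProduct_of_orthonormal horth, sum_filter_of_ne]
    intro k _ hk
    by_contra hpk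
    exact hk (by rw [dotProduct_eq_zero_of_mem_span horth hf hpk, zero_mul])
  rw [hexp, ← Real.sqrt_mul (sum_nonneg fun _ _ => sq_nonneg _)]
  exact Real.abs_le_sqrt (sum_mul_sq_le_sq_mul_sq _ _ _)

theorem pow_mul_sum_sq_dotProduct_le {P : Matrix ι ι ℝ} (hP : P.IsSymm) {lam : ι → ℝ}
    (horth : ∀ k l, ∑ i, φ k i * φ l i = if k = l then (1 : ℝ) else 0)
    (heig : ∀ k, P *ᵥ φ k = lam k • φ k) {lambda : ℝ} (hl : 0 ≤ lambda) (m : ℕ) (e : ι → ℝ) :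
    (lambda ^ m) ^ 2 * ∑ k ∈ univ.filter (fun k => lambda ≤ |lam k|), (e ⬝ᵥ φ k) ^ 2
      ≤ ∑ i, (P ^ m *ᵥ e) i ^ 2 := by
  calc (lambda ^ m) ^ 2 * ∑ k ∈ univ.filter (fun k => lambda ≤ |lam k|), (e ⬝ᵥ φ k) ^ 2
      = ∑ k ∈ univ.filter (fun k => lambda ≤ |lam k|), (lambda ^ m) ^ 2 * (e ⬝ᵥ φ k) ^ 2 :=
        mul_sum _ _ _
    _ ≤ ∑ k ∈ univ.filter (fun k => lambda ≤ |lam k|), (lam k ^ m * (e ⬝ᵥ φ k)) ^ 2 := by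
        refine sum_le_sum fun k hk => ?_
        rw [mul_pow, ← sq_abs (lam k ^ m), abs_pow]
        gcongr
        exact (mem_filter.mp hk).2
    _ ≤ ∑ k, (lam k ^ m * (e ⬝ᵥ φ k)) ^ 2 :=
        sum_le_sum_of_subset_of_nonneg (filter_subset _ _) fun _ _ _ => sq_nonneg _
    _ = ∑ k, ((P ^ m *ᵥ e) ⬝ᵥ φ k) ^ 2 := by
        simp only [pow_mulVec_dotProduct_of_isSymm hP (heig _)]
    _ = ∑ i, (P ^ m *ᵥ e) i ^ 2 := sum_sq_dotProduct_of_orthonormal horth _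

theorem sqrt_sum_sq_dotProduct_le {P : Matrix ι ι ℝ} (hP : P.IsSymm) {lam : ι → ℝ}
    (horth : ∀ k l, ∑ i, φ k i * φ l i = if k = l then (1 : ℝ) else 0)
    (heig : ∀ k, P *ᵥ φ k = lam k • φ k) {lambda : ℝ} (hl : 0 < lambda) (m : ℕ) (e : ι → ℝ) :
    √(∑ k ∈ univ.filter (fun k => lambda ≤ |lam k|), (e ⬝ᵥ φ k) ^ 2)
      ≤ √(∑ i, (P ^ m *ᵥ e) i ^ 2) / lambda ^ m := by
  rw [le_div_iff₀ (by positivity), ← Real.sqrt_sq (pow_pos hl m).le,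
    ← Real.sqrt_mul (sum_nonneg fun _ _ => sq_nonneg _), mul_comm]
  exact Real.sqrt_le_sqrt (pow_mul_sum_sq_dotProduct_le hP horth heig hl.le m e)

end Spectral

section Quadrature

variable {ι : Type*} [Fintype ι]

theorem one_add_smul_laplacian_mulVec_one [DecidableEq ι] (A : Matrix ι ι ℝ) (c : ℝ) :
    (1 + c • (A - diagonal fun i => ∑ j, A i j)) *ᵥ 1 = 1 := by
  have hlap : (A - diagonal fun i => ∑ j, A i j) *ᵥ 1 = 0 := by
    ext i
    simp [mulVec, dotProduct, diagonal_apply]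
  rw [add_mulVec, one_mulVec, smul_mulVec, hlap, smul_zero, add_zero]

theorem sum_pow_mulVec_of_isSymm [DecidableEq ι] {P : Matrix ι ι ℝ} (hP : P.IsSymm)
    (h1 : P *ᵥ 1 = 1) (m : ℕ) (v : ι → ℝ) : ∑ i, (P ^ m *ᵥ v) i = ∑ i, v i := by
  have h := pow_mulVec_dotProduct_of_isSymm hP (c := 1) (by rwa [one_smul]) m v
  rwa [one_pow, one_mul, dotProduct_one, dotProduct_one] at h

theorem sum_sq_inv_card_sub {g : ι → ℝ} (hg : ∑ i, g i = 1) :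
    ∑ i, (((1 / (Fintype.card ι : ℝ)) • 1 - g) i) ^ 2 = ∑ i, g i ^ 2 - 1 / Fintype.card ι := by
  simp only [Pi.sub_apply, Pi.smul_apply, Pi.one_apply, smul_eq_mul, mul_one, sub_sq,
    sum_add_distrib, sum_sub_distrib, ← mul_sum, hg, sum_const, card_univ, nsmul_eq_mul]
  rcases eq_or_ne (Fintype.card ι : ℝ) 0 with h | h
  · simp [h]
  · field_simp
    ring

theorem mul_sum_sub_sum_eq_dotProduct [DecidableEq ι] (c : ℝ) (f a : ι → ℝ) (W : Finset ι) :
    c * ∑ v, f v - ∑ w ∈ W, a w * f w = f ⬝ᵥ (c • 1 - fun v => if v ∈ W then a v else 0) := by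
  simp [dotProduct, mul_sub, sum_sub_distrib, mul_sum, mul_comm]

end Quadrature

theorem main_theorem_quadrature_bound_general
    (n : ℕ)
    (A : Matrix (Fin n) (Fin n) ℝ)
    (hsymm : A.IsSymm)
    (D : Matrix (Fin n) (Fin n) ℝ)
    (hD : D = Matrix.diagonal fun i => ∑ j, A i j)
    (dmax : ℝ)
    (L : Matrix (Fin n) (Fin n) ℝ) (hL : L = dmax⁻¹ • (A - D))
    (φ : Fin n → Fin n → ℝ) (lam : Fin n → ℝ)
    (horth : ∀ k l, ∑ i, φ k i * φ l i = if k = l then (1 : ℝ) else 0)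
    (heig : ∀ k, (1 + L).mulVec (φ k) = lam k • φ k)
    (lambda : ℝ) (hl0 : 0 < lambda)
    (W : Finset (Fin n)) (a : Fin n → ℝ) (ha : ∑ w ∈ W, a w = 1)
    (f : Fin n → ℝ)
    (hf : f ∈ Submodule.span ℝ (φ '' {k | lambda ≤ |lam k|}))
    (ℓ : ℕ) :
    |(1 / (n : ℝ)) * ∑ v, f v - ∑ w ∈ W, a w * f w|
      ≤ (Real.sqrt (∑ k ∈ Finset.univ.filter (fun k => lambda ≤ |lam k|),
            (∑ i, f i * φ k i) ^ 2) / lambda ^ ℓ)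
        * Real.sqrt ((∑ i, (((1 + L) ^ ℓ).mulVec
            (fun v => if v ∈ W then a v else 0) i) ^ 2) - 1 / (n : ℝ)) := by
  set μ : Fin n → ℝ := fun v => if v ∈ W then a v else 0
  set e : Fin n → ℝ := (1 / (n : ℝ)) • 1 - μ
  have hP : (1 + L).IsSymm := by
    rw [hL, hD]
    exact isSymm_one.add ((hsymm.sub (isSymm_diagonal _)).smul _)
  have hP1 : (1 + L) *ᵥ 1 = 1 := by
    rw [hL, hD]
    exact one_add_smul_laplacian_mulVec_one A dmax⁻¹
  have hμ : ∑ i, μ i = 1 := by rwa [sum_ite_mem, univ_inter]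
  have he : ∑ i, ((1 + L) ^ ℓ *ᵥ e) i ^ 2 = ∑ i, ((1 + L) ^ ℓ *ᵥ μ) i ^ 2 - 1 / n := by
    have h := sum_sq_inv_card_sub (by rw [sum_pow_mulVec_of_isSymm hP hP1 ℓ μ, hμ])
    rw [Fintype.card_fin] at h
    rwa [mulVec_sub, mulVec_smul, pow_mulVec_eq_self_of_mulVec_eq_self hP1]
  rw [mul_sum_sub_sum_eq_dotProduct, ← he]
  calc |f ⬝ᵥ e|
      ≤ √(∑ k ∈ univ.filter (fun k => lambda ≤ |lam k|), (f ⬝ᵥ φ k) ^ 2)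
        * √(∑ k ∈ univ.filter (fun k => lambda ≤ |lam k|), (e ⬝ᵥ φ k) ^ 2) :=
        abs_dotProduct_le_of_mem_span horth hf e
    _ ≤ √(∑ k ∈ univ.filter (fun k => lambda ≤ |lam k|), (f ⬝ᵥ φ k) ^ 2)
        * (√(∑ i, ((1 + L) ^ ℓ *ᵥ e) i ^ 2) / lambda ^ ℓ) := by
        gcongr
        exact sqrt_sum_sq_dotProduct_le hP horth heig hl0 ℓ e
    _ = _ := (mul_comm_div _ _ _).symm

theorem main_theorem_quadrature_bound
    (n : ℕ) (hn : 0 < n)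
    (A : Matrix (Fin n) (Fin n) ℝ)
    (hsymm : A.IsSymm) (hnn : ∀ i j, 0 ≤ A i j)
    (D : Matrix (Fin n) (Fin n) ℝ)
    (hD : D = Matrix.diagonal fun i => ∑ j, A i j)
    (dmax : ℝ)
    (hub : ∀ i, ∑ j, A i j ≤ dmax) (hmem : ∃ i, ∑ j, A i j = dmax)
    (hpos : 0 < dmax)
    (L : Matrix (Fin n) (Fin n) ℝ) (hL : L = dmax⁻¹ • (A - D))
    (φ : Fin n → Fin n → ℝ) (lam : Fin n → ℝ)
    (horth : ∀ k l, ∑ i, φ k i * φ l i = if k = l then (1 : ℝ) else 0)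
    (heig : ∀ k, (1 + L).mulVec (φ k) = lam k • φ k)
    (hφ1 : φ ⟨0, hn⟩ = fun _ => 1 / Real.sqrt n)
    (hlam1 : lam ⟨0, hn⟩ = 1)
    (lambda : ℝ) (hl0 : 0 < lambda) (hl1 : lambda < 1)
    (W : Finset (Fin n)) (a : Fin n → ℝ) (ha : ∑ w ∈ W, a w = 1)
    (f : Fin n → ℝ)
    (hf : f ∈ Submodule.span ℝ (φ '' {k | lambda ≤ |lam k|}))
    (ℓ : ℕ) :
    |(1 / (n : ℝ)) * ∑ v, f v - ∑ w ∈ W, a w * f w|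
      ≤ (Real.sqrt (∑ k ∈ Finset.univ.filter (fun k => lambda ≤ |lam k|),
            (∑ i, f i * φ k i) ^ 2) / lambda ^ ℓ)
        * Real.sqrt ((∑ i, (((1 + L) ^ ℓ).mulVec
            (fun v => if v ∈ W then a v else 0) i) ^ 2) - 1 / (n : ℝ)) :=
  main_theorem_quadrature_bound_general n A hsymm D hD dmax L hL φ lam horth heig lambda hl0 W a ha
    f hf ℓ
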